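/- Let f : ℝ → ℝ be continuous and let I' = [a,b] with f(I') ⊆ I'. If f has only finitely many fixed points in I', all of them lying in the open interval (a,b), and at each fixed point x the map satisfies f(x) = x with f − id changing sign, then the number of fixed points in I' is odd. -/
import Mathlib

private lemma sign_pos_of_no_zero (g : ℝ → ℝ) (u v : ℝ) (huv : u ≤ v)
    (hc : ContinuousOn g (Set.Icc u v)) (hu : 0 < g u)
    (hz : ∀ x ∈ Set.Icc u v, g x ≠ 0) : 0 < g v := by
  by_contra h
  push_neg at h
  have hv : g v < 0 := lt_of_le_of_ne h (hz v ⟨huv, le_refl v⟩)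
  obtain ⟨x, hx, hx0⟩ := intermediate_value_Icc' huv hc ⟨hv.le, hu.le⟩
  exact hz x hx hx0

private lemma sign_neg_of_no_zero (g : ℝ → ℝ) (u v : ℝ) (huv : u ≤ v)
    (hc : ContinuousOn g (Set.Icc u v)) (hu : g u < 0)
    (hz : ∀ x ∈ Set.Icc u v, g x ≠ 0) : g v < 0 := by
  by_contra h
  push_neg at h
  have hv : 0 < g v := lt_of_le_of_ne h (fun he => hz v ⟨huv, le_refl v⟩ he.symm)
  obtain ⟨x, hx, hx0⟩ := intermediate_value_Icc huv hc ⟨hu.le, hv.le⟩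
  exact hz x hx hx0

private lemma odd_zeros_aux : ∀ n : ℕ, ∀ (g : ℝ → ℝ) (a b : ℝ), a < b →
    ContinuousOn g (Set.Icc a b) → 0 < g a → g b < 0 →
    ∀ (s : Finset ℝ), s.card = n →
    (∀ x, x ∈ s ↔ x ∈ Set.Icc a b ∧ g x = 0) →
    (∀ x ∈ s, x ∈ Set.Ioo a b) →
    (∀ x₀ ∈ s, ∃ ε > 0,
      ((∀ y, x₀ - ε < y → y < x₀ → 0 < g y) ∧ (∀ y, x₀ < y → y < x₀ + ε → g y < 0)) ∨
      ((∀ y, x₀ - ε < y → y < x₀ → g y < 0) ∧ (∀ y, x₀ < y → y < x₀ + ε → 0 < g y))) →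
    Odd n := by
  intro n
  induction n using Nat.strong_induction_on with
  | _ n ih =>
    intro g a b hab hc hga hgb s hcard hs hint hsign
    -- s is nonempty by IVT
    have hne : s.Nonempty := by
      obtain ⟨x, hx, hx0⟩ := intermediate_value_Icc' hab.le hc ⟨hgb.le, hga.le⟩
      exact ⟨x, (hs x).2 ⟨hx, hx0⟩⟩
    have hn1 : 1 ≤ n := by
      rw [← hcard]; exact Finset.card_pos.2 hne
    rcases eq_or_lt_of_le hn1 with h1 | h2
    · exact ⟨0, by omega⟩
    -- n ≥ 2
    set x₀ := s.min' hne with hx₀def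
    have hx₀s : x₀ ∈ s := s.min'_mem hne
    have hx₀int : x₀ ∈ Set.Ioo a b := hint _ hx₀s
    -- g is positive on [a, x₀)
    have hposleft : ∀ y, a ≤ y → y < x₀ → 0 < g y := by
      intro y hay hyx
      have hyb : y ≤ b := le_of_lt (lt_of_lt_of_le hyx hx₀int.2.le)
      refine sign_pos_of_no_zero g a y hay (hc.mono (Set.Icc_subset_Icc le_rfl hyb)) hga ?_
      intro x hx hx0
      have hxs : x ∈ s := (hs x).2 ⟨⟨hx.1, le_trans hx.2 hyb⟩, hx0⟩
      exact absurd (s.min'_le x hxs) (by linarith [hx.2])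
    -- determine the sign change direction at x₀
    obtain ⟨ε₀, hε₀, hdisj₀⟩ := hsign x₀ hx₀s
    have hright₀ : ∀ y, x₀ < y → y < x₀ + ε₀ → g y < 0 := by
      rcases hdisj₀ with ⟨_, h⟩ | ⟨h, _⟩
      · exact h
      · exfalso
        set y := max a (x₀ - ε₀ / 2) with hy
        have hy1 : y < x₀ := max_lt hx₀int.1 (by linarith)
        have hy2 : x₀ - ε₀ < y := lt_of_lt_of_le (by linarith) (le_max_right _ _)
        have := h y hy2 hy1
        have := hposleft y (le_max_left _ _) hy1
        linarith
    -- second smallest zero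
    have hs'ne : (s.erase x₀).Nonempty := by
      rw [← Finset.card_pos, Finset.card_erase_of_mem hx₀s, hcard]; omega
    set x₁ := (s.erase x₀).min' hs'ne with hx₁def
    have hx₁s' : x₁ ∈ s.erase x₀ := Finset.min'_mem _ hs'ne
    have hx₁s : x₁ ∈ s := Finset.mem_of_mem_erase hx₁s'
    have hx₁int : x₁ ∈ Set.Ioo a b := hint _ hx₁s
    have hx₀x₁ : x₀ < x₁ :=
      lt_of_le_of_ne (s.min'_le x₁ hx₁s) (Ne.symm (Finset.ne_of_mem_erase hx₁s'))
    -- g is negative on (x₀, x₁)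
    have hnegmid : ∀ y, x₀ < y → y < x₁ → g y < 0 := by
      intro y hx₀y hyx₁
      set d := min ((x₀ + y) / 2) (x₀ + ε₀ / 2) with hd
      have hd1 : x₀ < d := lt_min (by linarith) (by linarith)
      have hd2 : d < x₀ + ε₀ := lt_of_le_of_lt (min_le_right _ _) (by linarith)
      have hd3 : d ≤ y := le_trans (min_le_left _ _) (by linarith)
      have hgd : g d < 0 := hright₀ d hd1 hd2
      have hyb : y ≤ b := le_of_lt (lt_of_lt_of_le hyx₁ hx₁int.2.le)
      have hda : a ≤ d := le_of_lt (lt_trans hx₀int.1 hd1)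
      refine sign_neg_of_no_zero g d y hd3
        (hc.mono (Set.Icc_subset_Icc hda hyb)) hgd ?_
      intro x hx hx0
      have hxs : x ∈ s := (hs x).2 ⟨⟨le_trans hda hx.1, le_trans hx.2 hyb⟩, hx0⟩
      have hxne : x ≠ x₀ := by intro he; rw [he] at hx; linarith [hx.1]
      have := Finset.min'_le _ x (Finset.mem_erase.2 ⟨hxne, hxs⟩)
      linarith [hx.2]
    -- determine sign change direction at x₁
    obtain ⟨ε₁, hε₁, hdisj₁⟩ := hsign x₁ hx₁s
    have hright₁ : ∀ y, x₁ < y → y < x₁ + ε₁ → 0 < g y := by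
      rcases hdisj₁ with ⟨h, _⟩ | ⟨_, h⟩
      swap
      · exact h
      exfalso
      set y := max ((x₀ + x₁) / 2) (x₁ - ε₁ / 2) with hy
      have hy1 : y < x₁ := max_lt (by linarith) (by linarith)
      have hy2 : x₁ - ε₁ < y := lt_of_lt_of_le (by linarith) (le_max_right _ _)
      have hy3 : x₀ < y := lt_of_lt_of_le (by linarith) (le_max_left _ _)
      have := h y hy2 hy1
      have := hnegmid y hy3 hy1
      linarith
    -- remaining zeros
    set s'' := (s.erase x₀).erase x₁ with hs''def
    have hs''card : s''.card = n - 2 := by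
      rw [hs''def, Finset.card_erase_of_mem hx₁s', Finset.card_erase_of_mem hx₀s, hcard]; omega
    have hs''gt : ∀ x ∈ s'', x₁ < x := by
      intro x hx
      exact lt_of_le_of_ne (Finset.min'_le _ x (Finset.mem_of_mem_erase hx))
        (Ne.symm (Finset.ne_of_mem_erase hx))
    set m := if h : s''.Nonempty then s''.min' h else b with hm
    have hmx₁ : x₁ < m := by
      rw [hm]; split
      · next h => exact hs''gt _ (Finset.min'_mem _ h)
      · exact hx₁int.2
    have hmb : m ≤ b := by
      rw [hm]; split
      · next h => exact (hint _ (Finset.mem_of_mem_erase (Finset.mem_of_mem_erase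
          (Finset.min'_mem _ h)))).2.le
      · exact le_rfl
    have hmle : ∀ x ∈ s'', m ≤ x := by
      intro x hx
      rw [hm]
      have : s''.Nonempty := ⟨x, hx⟩
      rw [dif_pos this]
      exact Finset.min'_le _ x hx
    set c := min (x₁ + ε₁ / 2) ((x₁ + m) / 2) with hcdef
    have hc1 : x₁ < c := lt_min (by linarith) (by linarith)
    have hc2 : c < x₁ + ε₁ := lt_of_le_of_lt (min_le_left _ _) (by linarith)
    have hc3 : c < m := lt_of_le_of_lt (min_le_right _ _) (by linarith)
    have hcb : c < b := lt_of_lt_of_le hc3 hmb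
    have hca : a ≤ c := le_of_lt (lt_trans hx₁int.1 hc1)
    have hgc : 0 < g c := hright₁ c hc1 hc2
    -- apply induction hypothesis on [c, b]
    have hodd : Odd (n - 2) := by
      refine ih (n - 2) (by omega) g c b hcb
        (hc.mono (Set.Icc_subset_Icc hca le_rfl)) hgc hgb s'' hs''card ?_ ?_ ?_
      · intro x
        constructor
        · intro hx
          have hxs : x ∈ s := Finset.mem_of_mem_erase (Finset.mem_of_mem_erase hx)
          exact ⟨⟨le_of_lt (lt_of_lt_of_le hc3 (hmle x hx)), (hint _ hxs).2.le⟩,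
            ((hs x).1 hxs).2⟩
        · rintro ⟨⟨hcx, hxb⟩, hx0⟩
          have hxs : x ∈ s := (hs x).2 ⟨⟨le_trans hca hcx, hxb⟩, hx0⟩
          have h1 : x ≠ x₀ := by intro he; rw [he] at hcx; linarith
          have h2 : x ≠ x₁ := by intro he; rw [he] at hcx; linarith
          exact Finset.mem_erase.2 ⟨h2, Finset.mem_erase.2 ⟨h1, hxs⟩⟩
      · intro x hx
        exact ⟨lt_of_lt_of_le hc3 (hmle x hx),
          (hint _ (Finset.mem_of_mem_erase (Finset.mem_of_mem_erase hx))).2⟩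
      · intro x hx
        exact hsign x (Finset.mem_of_mem_erase (Finset.mem_of_mem_erase hx))
    obtain ⟨k, hk⟩ := hodd
    exact ⟨k + 1, by omega⟩

/-- If a continuous self-map of `[a,b]` has finitely many fixed points, all interior,
each a sign change of `f - id` (with `f a > a`, `f b < b`), then the number of fixed
points is odd. -/
theorem odd_number_of_fixed_points (f : ℝ → ℝ) (a b : ℝ) (hab : a < b)
    (hcont : ContinuousOn f (Set.Icc a b))
    (hmaps : Set.MapsTo f (Set.Icc a b) (Set.Icc a b))
    (ha : a < f a) (hb : f b < b)
    (s : Finset ℝ)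
    (hs : ∀ x, x ∈ s ↔ x ∈ Set.Icc a b ∧ f x = x)
    (hint : ∀ x ∈ s, x ∈ Set.Ioo a b)
    (hsign : ∀ x₀ ∈ s, ∃ ε > 0,
      ((∀ y, x₀ - ε < y → y < x₀ → 0 < f y - y) ∧ (∀ y, x₀ < y → y < x₀ + ε → f y - y < 0)) ∨
      ((∀ y, x₀ - ε < y → y < x₀ → f y - y < 0) ∧ (∀ y, x₀ < y → y < x₀ + ε → 0 < f y - y))) :
    Odd s.card := by
  refine odd_zeros_aux s.card (fun x => f x - x) a b hab
    (hcont.sub continuousOn_id) (show (0:ℝ) < f a - a by linarith) (show f b - b < 0 by linarith) s rfl ?_ hint hsign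
  intro x
  rw [hs x, sub_eq_zero]
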